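/- arXiv:2309.01244 — 4 statements merged into one kernel-verified Lean document; each statement's English description precedes it below -/
import Mathlib

section
/- Let $f: X \to \mathbb{R}$ be a convex function on a nonempty convex set $X \subseteq \mathbb{R}^n$ with diameter at most $D$ (i.e., $\|x - \bar{x}\| \le D$ for all $x, \bar{x} \in X$). Let $f^* = \min_{x \in X} f(x)$ be attained at some $x^* \in X$, let $x_0 \in X$, and let $\rho > 0$. Define the proximal gap $\Delta = f(x_0) - \min_{x \in X}\left(f(x) + \frac{\rho}{2}\|x - x_0\|^2\right)$. If $f(x_0) - f^* \le \rho D^2$, then $\Delta \ge \frac{(f(x_0) - f^*)^2}{2\rho D^2}$. -/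
open EuclideanSpace

/-- Lemma 1 (first case): lower bound on the proximal gap when the
optimality gap is at most `ρ D²`. -/
theorem stmt_0 {n : ℕ} (X : Set (EuclideanSpace ℝ (Fin n)))
    (hX : X.Nonempty) (hXconv : Convex ℝ X)
    (D : ℝ) (hD : 0 < D) (hdiam : ∀ x ∈ X, ∀ y ∈ X, ‖x - y‖ ≤ D)
    (f : EuclideanSpace ℝ (Fin n) → ℝ) (hf : ConvexOn ℝ X f)
    (fstar : ℝ) (xstar : EuclideanSpace ℝ (Fin n)) (hxstar : xstar ∈ X)
    (hfstar : f xstar = fstar) (hmin : ∀ x ∈ X, fstar ≤ f x)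
    (x0 : EuclideanSpace ℝ (Fin n)) (hx0 : x0 ∈ X)
    (ρ : ℝ) (hρ : 0 < ρ)
    (xp : EuclideanSpace ℝ (Fin n)) (hxp : xp ∈ X)
    (hxpmin : ∀ x ∈ X, f xp + ρ / 2 * ‖xp - x0‖ ^ 2 ≤ f x + ρ / 2 * ‖x - x0‖ ^ 2)
    (Δ : ℝ) (hΔ : Δ = f x0 - (f xp + ρ / 2 * ‖xp - x0‖ ^ 2))
    (hcase : f x0 - fstar ≤ ρ * D ^ 2) :
    Δ ≥ (f x0 - fstar) ^ 2 / (2 * ρ * D ^ 2) := by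
  set g := f x0 - fstar with hg
  have hg0 : 0 ≤ g := by have := hmin x0 hx0; simp [hg]; linarith
  set t : ℝ := g / (ρ * D ^ 2) with ht
  have hden : 0 < ρ * D ^ 2 := by positivity
  have ht0 : 0 ≤ t := div_nonneg hg0 hden.le
  have ht1 : t ≤ 1 := by rw [ht, div_le_one hden]; exact hcase
  set xt := (1 - t) • x0 + t • xstar with hxt
  have hxtX : xt ∈ X := hXconv hx0 hxstar (by linarith) ht0 (by ring)
  have hfxt : f xt ≤ (1 - t) * f x0 + t * fstar := by
    have := hf.2 hx0 hxstar (by linarith : (0:ℝ) ≤ 1 - t) ht0 (by ring)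
    simpa [hfstar] using this
  have hnorm : ‖xt - x0‖ = t * ‖xstar - x0‖ := by
    have : xt - x0 = t • (xstar - x0) := by
      rw [hxt]; module
    rw [this, norm_smul, Real.norm_eq_abs, abs_of_nonneg ht0]
  have hdx : ‖xstar - x0‖ ≤ D := hdiam xstar hxstar x0 hx0
  have hdx0 : 0 ≤ ‖xstar - x0‖ := norm_nonneg _
  have key := hxpmin xt hxtX
  have hΔ1 : Δ ≥ t * g - ρ / 2 * t ^ 2 * D ^ 2 := by
    rw [hΔ]
    have h1 : ρ / 2 * ‖xt - x0‖ ^ 2 ≤ ρ / 2 * t ^ 2 * D ^ 2 := by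
      rw [hnorm]
      have h2 := mul_le_mul_of_nonneg_left (mul_le_mul hdx hdx hdx0 hD.le)
        (by positivity : (0:ℝ) ≤ ρ / 2 * t ^ 2)
      nlinarith [h2]
    nlinarith
  have hfin : t * g - ρ / 2 * t ^ 2 * D ^ 2 = g ^ 2 / (2 * ρ * D ^ 2) := by
    rw [ht]; field_simp; ring
  linarith [hΔ1, hfin.ge]
end

section
/- Let $f: X \to \mathbb{R}$ be a convex function on a nonempty convex set $X \subseteq \mathbb{R}^n$ with diameter at most $D$. Let $f^* = \min_{x \in X} f(x)$ be attained at some $x^* \in X$, let $x_0 \in X$, and let $\rho > 0$. Define $\Delta = f(x_0) - \min_{x \in X}\left(f(x) + \frac{\rho}{2}\|x - x_0\|^2\right)$. If $f(x_0) - f^* > \rho D^2$, then $\Delta \ge \frac{f(x_0) - f^*}{2}$. -/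
/-- Lemma 1 (second case): lower bound on the proximal gap when the
optimality gap exceeds `ρ D²`. -/
theorem stmt_1 {n : ℕ} (X : Set (EuclideanSpace ℝ (Fin n)))
    (hX : X.Nonempty) (hXconv : Convex ℝ X)
    (D : ℝ) (hD : 0 < D) (hdiam : ∀ x ∈ X, ∀ y ∈ X, ‖x - y‖ ≤ D)
    (f : EuclideanSpace ℝ (Fin n) → ℝ) (hf : ConvexOn ℝ X f)
    (fstar : ℝ) (xstar : EuclideanSpace ℝ (Fin n)) (hxstar : xstar ∈ X)
    (hfstar : f xstar = fstar) (hmin : ∀ x ∈ X, fstar ≤ f x)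
    (x0 : EuclideanSpace ℝ (Fin n)) (hx0 : x0 ∈ X)
    (ρ : ℝ) (hρ : 0 < ρ)
    (xp : EuclideanSpace ℝ (Fin n)) (hxp : xp ∈ X)
    (hxpmin : ∀ x ∈ X, f xp + ρ / 2 * ‖xp - x0‖ ^ 2 ≤ f x + ρ / 2 * ‖x - x0‖ ^ 2)
    (Δ : ℝ) (hΔ : Δ = f x0 - (f xp + ρ / 2 * ‖xp - x0‖ ^ 2))
    (hcase : f x0 - fstar > ρ * D ^ 2) :
    Δ ≥ (f x0 - fstar) / 2 := by
  have h1 := hxpmin xstar hxstar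
  have h2 : ‖xstar - x0‖ ≤ D := hdiam xstar hxstar x0 hx0
  have h3 : (0:ℝ) ≤ ‖xstar - x0‖ := norm_nonneg _
  nlinarith [sq_nonneg (‖xstar - x0‖ - D), mul_le_mul_of_nonneg_left (mul_le_mul h2 h2 h3 hD.le) hρ.le]
end

section
/- Let $f: X \to \mathbb{R}$ be a convex function on a convex set $X \subseteq \mathbb{R}^n$ that is $\mu$-sharp, i.e., $f(x) - f^* \ge \mu \cdot \mathrm{dist}(x, X^*)$ for all $x \in X$, where $X^*$ is the (nonempty) optimal solution set and $f^* = \min_{x \in X} f(x)$. Let $x_0 \in X$ and $\rho > 0$, and define $\Delta = f(x_0) - \min_{x \in X}(f(x) + \frac{\rho}{2}\|x - x_0\|^2)$. If $f(x_0) - f^* \ge \mu^2/\rho$, then $\Delta \ge \frac{\mu^2}{2\rho}$. -/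
/-!
Compare the proximal value with the value at the point `(1 - t) • x₀ + t • y` on the segment
from `x₀` towards a minimiser `y` close to `x₀`. Convexity and the proximal minimality give
`Δ ≥ t (f x₀ - f*) - ρ t² d² / 2` with `d = dist(x₀, X*)`, and sharpness bounds `d` by
`(f x₀ - f*) / μ`. The step `t = μ² / (ρ (f x₀ - f*))` then yields `μ² / (2ρ)`; the hypothesis
`f x₀ - f* ≥ μ² / ρ` is exactly what makes this step admissible, `t ≤ 1`.
-/

open Metric

section ProximalGap

variable {E : Type*} [NormedAddCommGroup E] [NormedSpace ℝ E]
  {X : Set E} {f : E → ℝ} {x₀ xp : E} {ρ t : ℝ}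

theorem ConvexOn.mul_sub_sub_le_proxGap (hf : ConvexOn ℝ X f) (hx₀ : x₀ ∈ X) {y : E}
    (hy : y ∈ X) (ht₀ : 0 ≤ t) (ht₁ : t ≤ 1)
    (hxp : ∀ x ∈ X, f xp + ρ / 2 * ‖xp - x₀‖ ^ 2 ≤ f x + ρ / 2 * ‖x - x₀‖ ^ 2) :
    t * (f x₀ - f y) - ρ / 2 * t ^ 2 * ‖y - x₀‖ ^ 2 ≤
      f x₀ - (f xp + ρ / 2 * ‖xp - x₀‖ ^ 2) := by
  set z := (1 - t) • x₀ + t • y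
  have hz : z ∈ X := hf.1 hx₀ hy (by linarith) ht₀ (by ring)
  have hfz : f z ≤ (1 - t) * f x₀ + t * f y := hf.2 hx₀ hy (by linarith) ht₀ (by ring)
  have hzx₀ : ‖z - x₀‖ = t * ‖y - x₀‖ := by
    rw [show z - x₀ = t • (y - x₀) by module, norm_smul, Real.norm_of_nonneg ht₀]
  have := hxp z hz
  rw [hzx₀, mul_pow] at this
  linarith

theorem ConvexOn.mul_sub_sub_infDist_le_proxGap (hf : ConvexOn ℝ X f) (hx₀ : x₀ ∈ X)
    {S : Set E} {c : ℝ} (hS : S.Nonempty) (hSX : S ⊆ X) (hfS : ∀ y ∈ S, f y = c) (hρ : 0 ≤ ρ)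
    (ht₀ : 0 ≤ t) (ht₁ : t ≤ 1)
    (hxp : ∀ x ∈ X, f xp + ρ / 2 * ‖xp - x₀‖ ^ 2 ≤ f x + ρ / 2 * ‖x - x₀‖ ^ 2) :
    t * (f x₀ - c) - ρ / 2 * t ^ 2 * infDist x₀ S ^ 2 ≤
      f x₀ - (f xp + ρ / 2 * ‖xp - x₀‖ ^ 2) := by
  -- `S` need not be closed, so `infDist x₀ S` is only approached by distances to points of `S`.
  have hbound : ∀ r > infDist x₀ S,
      t * (f x₀ - c) - ρ / 2 * t ^ 2 * r ^ 2 ≤ f x₀ - (f xp + ρ / 2 * ‖xp - x₀‖ ^ 2) := by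
    intro r hr
    obtain ⟨y, hyS, hyr⟩ := (infDist_lt_iff hS).mp hr
    have hyr' : ‖y - x₀‖ ≤ r := by rw [← dist_eq_norm, dist_comm]; exact hyr.le
    calc t * (f x₀ - c) - ρ / 2 * t ^ 2 * r ^ 2
        ≤ t * (f x₀ - f y) - ρ / 2 * t ^ 2 * ‖y - x₀‖ ^ 2 := by rw [hfS y hyS]; gcongr
      _ ≤ _ := hf.mul_sub_sub_le_proxGap hx₀ (hSX hyS) ht₀ ht₁ hxp
  have hcont : Continuous fun r : ℝ ↦ t * (f x₀ - c) - ρ / 2 * t ^ 2 * r ^ 2 := by fun_prop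
  exact le_of_tendsto (hcont.continuousWithinAt (s := Set.Ioi _)).tendsto
    (eventually_nhdsWithin_of_forall hbound)

end ProximalGap

theorem exists_step_sq_div_le {μ ρ D d : ℝ} (hμ : 0 < μ) (hρ : 0 < ρ) (hD : μ ^ 2 / ρ ≤ D)
    (hd : 0 ≤ d) (hdD : μ * d ≤ D) :
    ∃ t, 0 ≤ t ∧ t ≤ 1 ∧ μ ^ 2 / (2 * ρ) ≤ t * D - ρ / 2 * t ^ 2 * d ^ 2 := by
  have hD₀ : 0 < D := (by positivity : 0 < μ ^ 2 / ρ).trans_le hD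
  refine ⟨μ ^ 2 / (ρ * D), by positivity, ?_, ?_⟩
  · rw [div_le_one (by positivity)]
    rwa [div_le_iff₀ hρ, mul_comm] at hD
  · have hd' : d ≤ D / μ := by rwa [le_div_iff₀ hμ, mul_comm]
    have hd2 : d ^ 2 ≤ (D / μ) ^ 2 := pow_le_pow_left₀ hd hd' 2
    calc μ ^ 2 / (2 * ρ) = μ ^ 2 / (ρ * D) * D - ρ / 2 * (μ ^ 2 / (ρ * D)) ^ 2 * (D / μ) ^ 2 := by
          field_simp; ring
      _ ≤ _ := by gcongr

theorem stmt_2_general {n : ℕ} (X : Set (EuclideanSpace ℝ (Fin n)))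
    (f : EuclideanSpace ℝ (Fin n) → ℝ) (hf : ConvexOn ℝ X f)
    (Xstar : Set (EuclideanSpace ℝ (Fin n))) (hXstarne : Xstar.Nonempty)
    (hXstarsub : Xstar ⊆ X)
    (fstar : ℝ) (hXstar : ∀ x ∈ Xstar, f x = fstar)
    (μ : ℝ) (hμ : 0 < μ)
    (hsharp : ∀ x ∈ X, f x - fstar ≥ μ * Metric.infDist x Xstar)
    (x0 : EuclideanSpace ℝ (Fin n)) (hx0 : x0 ∈ X)
    (ρ : ℝ) (hρ : 0 < ρ)
    (xp : EuclideanSpace ℝ (Fin n))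
    (hxpmin : ∀ x ∈ X, f xp + ρ / 2 * ‖xp - x0‖ ^ 2 ≤ f x + ρ / 2 * ‖x - x0‖ ^ 2)
    (Δ : ℝ) (hΔ : Δ = f x0 - (f xp + ρ / 2 * ‖xp - x0‖ ^ 2))
    (hcase : f x0 - fstar ≥ μ ^ 2 / ρ) :
    Δ ≥ μ ^ 2 / (2 * ρ) := by
  obtain ⟨t, ht₀, ht₁, hbound⟩ :=
    exists_step_sq_div_le hμ hρ hcase infDist_nonneg (hsharp x0 hx0)
  rw [hΔ]
  exact hbound.trans
    (hf.mul_sub_sub_infDist_le_proxGap hx0 hXstarne hXstarsub hXstar hρ.le ht₀ ht₁ hxpmin)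

/-- Sharpness case: lower bound `μ²/(2ρ)` on the proximal gap when the
optimality gap is at least `μ²/ρ`. -/
theorem stmt_2 {n : ℕ} (X : Set (EuclideanSpace ℝ (Fin n)))
    (hX : X.Nonempty) (hXconv : Convex ℝ X)
    (f : EuclideanSpace ℝ (Fin n) → ℝ) (hf : ConvexOn ℝ X f)
    (Xstar : Set (EuclideanSpace ℝ (Fin n))) (hXstarne : Xstar.Nonempty)
    (hXstarsub : Xstar ⊆ X)
    (fstar : ℝ) (hXstar : ∀ x ∈ Xstar, f x = fstar)
    (hmin : ∀ x ∈ X, fstar ≤ f x)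
    (μ : ℝ) (hμ : 0 < μ)
    (hsharp : ∀ x ∈ X, f x - fstar ≥ μ * Metric.infDist x Xstar)
    (x0 : EuclideanSpace ℝ (Fin n)) (hx0 : x0 ∈ X)
    (ρ : ℝ) (hρ : 0 < ρ)
    (xp : EuclideanSpace ℝ (Fin n)) (hxp : xp ∈ X)
    (hxpmin : ∀ x ∈ X, f xp + ρ / 2 * ‖xp - x0‖ ^ 2 ≤ f x + ρ / 2 * ‖x - x0‖ ^ 2)
    (Δ : ℝ) (hΔ : Δ = f x0 - (f xp + ρ / 2 * ‖xp - x0‖ ^ 2))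
    (hcase : f x0 - fstar ≥ μ ^ 2 / ρ) :
    Δ ≥ μ ^ 2 / (2 * ρ) :=
  stmt_2_general X f hf Xstar hXstarne hXstarsub fstar hXstar μ hμ hsharp x0 hx0 ρ hρ xp hxpmin Δ hΔ
    hcase
end

section
/- Let $f: X \to \mathbb{R}$ be a convex function on a convex set $X \subseteq \mathbb{R}^n$ that is $\mu$-sharp with nonempty optimal set $X^*$ and optimal value $f^*$. Let $x_0 \in X$ and $\rho > 0$, and define $\Delta = f(x_0) - \min_{x \in X}(f(x) + \frac{\rho}{2}\|x - x_0\|^2)$. If $0 < f(x_0) - f^* < \mu^2/\rho$, then $\Delta > \frac{f(x_0) - f^*}{2}$. -/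
/-- Sharpness case: strict lower bound `(f(x₀)-f*)/2` on the proximal gap
when `0 < f(x₀)-f* < μ²/ρ`. -/
theorem stmt_3 {n : ℕ} (X : Set (EuclideanSpace ℝ (Fin n)))
    (hX : X.Nonempty) (hXconv : Convex ℝ X)
    (f : EuclideanSpace ℝ (Fin n) → ℝ) (hf : ConvexOn ℝ X f)
    (Xstar : Set (EuclideanSpace ℝ (Fin n))) (hXstarne : Xstar.Nonempty)
    (hXstarsub : Xstar ⊆ X)
    (fstar : ℝ) (hXstar : ∀ x ∈ Xstar, f x = fstar)
    (hmin : ∀ x ∈ X, fstar ≤ f x)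
    (μ : ℝ) (hμ : 0 < μ)
    (hsharp : ∀ x ∈ X, f x - fstar ≥ μ * Metric.infDist x Xstar)
    (x0 : EuclideanSpace ℝ (Fin n)) (hx0 : x0 ∈ X)
    (ρ : ℝ) (hρ : 0 < ρ)
    (xp : EuclideanSpace ℝ (Fin n)) (hxp : xp ∈ X)
    (hxpmin : ∀ x ∈ X, f xp + ρ / 2 * ‖xp - x0‖ ^ 2 ≤ f x + ρ / 2 * ‖x - x0‖ ^ 2)
    (Δ : ℝ) (hΔ : Δ = f x0 - (f xp + ρ / 2 * ‖xp - x0‖ ^ 2))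
    (hpos : 0 < f x0 - fstar) (hcase : f x0 - fstar < μ ^ 2 / ρ) :
    Δ > (f x0 - fstar) / 2 := by
  set D : ℝ := f x0 - fstar with hD
  have hρD : ρ * D < μ ^ 2 := by
    have := (lt_div_iff₀ hρ).mp hcase
    nlinarith
  have hdist : Metric.infDist x0 Xstar ≤ D / μ := by
    have h := hsharp x0 hx0
    rw [ge_iff_le, ← le_div_iff₀' hμ] at h
    exact h
  -- slack
  have hc : 0 < D - ρ / 2 * (D / μ) ^ 2 - D / 2 := by
    have hμ2 : 0 < μ ^ 2 := by positivity
    have h1 : ρ / 2 * (D / μ) ^ 2 < D / 2 := by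
      rw [div_pow]
      have h2 : ρ * D ^ 2 / μ ^ 2 < D := (div_lt_iff₀ hμ2).mpr (by nlinarith)
      calc ρ / 2 * (D ^ 2 / μ ^ 2) = ρ * D ^ 2 / μ ^ 2 / 2 := by ring
        _ < D / 2 := by linarith
    linarith
  set c : ℝ := D - ρ / 2 * (D / μ) ^ 2 - D / 2 with hcdef
  set r : ℝ := Real.sqrt ((D / μ) ^ 2 + 2 * c / ρ) with hr
  have hr2 : r ^ 2 = (D / μ) ^ 2 + 2 * c / ρ := by
    rw [hr, Real.sq_sqrt]; positivity
  have hDr : D / μ < r := by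
    rw [hr, Real.lt_sqrt (by positivity)]
    have : 0 < 2 * c / ρ := by positivity
    linarith
  have hlt : Metric.infDist x0 Xstar < r := lt_of_le_of_lt hdist hDr
  obtain ⟨y, hy, hdy⟩ := (Metric.infDist_lt_iff hXstarne).mp hlt
  have hyX : y ∈ X := hXstarsub hy
  have hfy : f y = fstar := hXstar y hy
  have hnorm : ‖y - x0‖ = dist x0 y := by
    rw [dist_comm, dist_eq_norm]
  have hnorm2 : ‖y - x0‖ ^ 2 < r ^ 2 := by
    rw [hnorm]
    have h0 : 0 ≤ dist x0 y := dist_nonneg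
    nlinarith
  have hmain : f xp + ρ / 2 * ‖xp - x0‖ ^ 2 ≤ f y + ρ / 2 * ‖y - x0‖ ^ 2 :=
    hxpmin y hyX
  have : Δ ≥ f x0 - (f y + ρ / 2 * ‖y - x0‖ ^ 2) := by
    rw [hΔ]; linarith
  rw [hr2] at hnorm2
  have : Δ > f x0 - fstar - ρ / 2 * ((D / μ) ^ 2 + 2 * c / ρ) := by
    rw [hfy] at this
    nlinarith
  have hceq : ρ / 2 * (2 * c / ρ) = c := by field_simp
  calc Δ > f x0 - fstar - ρ / 2 * ((D / μ) ^ 2 + 2 * c / ρ) := this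
    _ = D - ρ / 2 * (D / μ) ^ 2 - c := by rw [mul_add, hceq]; ring
    _ = D / 2 := by rw [hcdef]; ring
end
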